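/- Let A consist of the covectors e¹, e², e¹+e², e¹−e² on ℂ² with nonzero multiplicities c₁, c₂, c₊, c₋, and suppose the form G = Σ_{α∈A} c_α α⊗α is non-degenerate. Then A is a trigonometric ∨-system if and only if c₁ = c₂, and this condition is equivalent to the orthogonality (e¹+e², e¹−e²) = 0 under the inner product induced by G on the dual space. -/

import Mathlib

open scoped BigOperators

noncomputable section

abbrev V (n : ℕ) := Fin n → ℂ
abbrev D (n : ℕ) := Module.Dual ℂ (V n)

/-- Wedge of two covectors: `(α∧β)(a,b) = α(a)β(b) − α(b)β(a)`. -/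
def wedge {n : ℕ} (α β : D n) (a b : V n) : ℂ := α a * β b - α b * β a

/-- `β` is parallel (collinear) to `α`. -/
def Parallel {n : ℕ} (α β : D n) : Prop := ∃ t : ℂ, β = t • α

/-- Two covectors belong to a common `α`-series: their difference or sum is an
integer multiple of `α`. -/
def SameSer {n : ℕ} (α γ₁ γ₂ : D n) : Prop :=
  ∃ m : ℤ, γ₁ - γ₂ = (m : ℂ) • α ∨ γ₁ + γ₂ = (m : ℂ) • α

/-- `Γ` is a (maximal) `α`-series of the system `A`. -/
def IsSeries {n : ℕ} (A : Finset (D n)) (α : D n) (Γ : Finset (D n)) : Prop :=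
  Γ ⊆ A ∧ (∀ β ∈ Γ, ¬ Parallel α β) ∧
    (∀ γ₁ ∈ Γ, ∀ γ₂ ∈ Γ, SameSer α γ₁ γ₂) ∧
    (∀ β ∈ A, ¬ Parallel α β → (∃ γ ∈ Γ, SameSer α β γ) → β ∈ Γ)

/-- The trigonometric ∨-system series conditions:
for every `α ∈ A` and every `α`-series `Γ`, `Σ_{β∈Γ} c_β (α,β) α∧β = 0`. -/
def SeriesCond {n : ℕ} (A : Finset (D n)) (c : D n → ℂ) (ip : D n → D n → ℂ) : Prop :=
  ∀ α ∈ A, ∀ Γ : Finset (D n), IsSeries A α Γ →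
    ∀ a b : V n, ∑ β ∈ Γ, c β * ip α β * wedge α β a b = 0

/-- The bilinear form `G(u,v) = Σ_{α∈A} c_α α(u) α(v)`. -/
def Gform {n : ℕ} (A : Finset (D n)) (c : D n → ℂ) (u v : V n) : ℂ :=
  ∑ α ∈ A, c α * α u * α v

/-- Non-degeneracy of a bilinear form on `ℂⁿ`. -/
def NonDeg {n : ℕ} (B : V n → V n → ℂ) : Prop :=
  ∀ u : V n, (∀ v : V n, B u v = 0) → u = 0

/-- All covectors of `A` lie in an `n`-dimensional lattice. -/
def InLattice {n : ℕ} (A : Finset (D n)) : Prop :=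
  ∃ f : Fin n → D n, LinearIndependent ℂ f ∧
    ∀ β ∈ A, ∃ m : Fin n → ℤ, β = ∑ i, (m i : ℂ) • f i

/-- The `i`-th coordinate covector. -/
def coD {n : ℕ} (i : Fin n) : D n := LinearMap.proj i

/-- Partial derivative in the `i`-th coordinate direction. -/
def pd {n : ℕ} (i : Fin n) (f : V n → ℂ) (x : V n) : ℂ := fderiv ℂ f x (Pi.single i 1)

/-- Irreducibility: `A` does not split as a direct sum of two lower-dimensional systems. -/
def Irred {n : ℕ} (A : Finset (D n)) : Prop :=
  ¬ ∃ U₁ U₂ : Submodule ℂ (D n), U₁ ⊓ U₂ = ⊥ ∧ (∀ β ∈ A, β ∈ U₁ ∨ β ∈ U₂) ∧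
    (∃ β ∈ A, β ∉ U₁) ∧ (∃ β ∈ A, β ∉ U₂)

/-!
Since `Σ_{β ∈ A} c_β (α, β) β = G(α^∨, ·) = α` and `α ∧ α = 0`, the `∨`-sum of every `α` over
the whole of `A` vanishes. For `α = e¹, e²` the covectors not parallel to `α` form a single
`α`-series, so these conditions hold for any multiplicities. For `α = e¹ ± e²` the series are
`{e¹, e²}` and `{e¹ ∓ e²}`, whose sums are opposite, so the conditions amount to
`(e¹ + e², e¹ − e²) = 0`. Solving `G(v, ·) = e¹ − e²` gives `Δ · (e¹ + e², e¹ − e²) = c₂ − c₁`,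
and `Δ ≠ 0` by non-degeneracy.
-/

open Matrix

theorem coD_apply {n : ℕ} (i : Fin n) (v : V n) : coD i v = v i := rfl

section Series

variable {n : ℕ}

theorem Parallel.refl (α : D n) : Parallel α α := ⟨1, (one_smul ℂ α).symm⟩

theorem not_parallel_of_apply {α β : D n} (v : V n) (hα : α v = 0) (hβ : β v ≠ 0) :
    ¬ Parallel α β := by
  rintro ⟨t, rfl⟩
  simp [hα] at hβ

theorem wedge_eq_zero_of_parallel {α β : D n} (h : Parallel α β) (a b : V n) :
    wedge α β a b = 0 := by
  obtain ⟨t, rfl⟩ := h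
  simp only [wedge, LinearMap.smul_apply, smul_eq_mul]
  ring

theorem SameSer.refl (α β : D n) : SameSer α β β := ⟨0, Or.inl (by simp)⟩

theorem SameSer.symm {α γ₁ γ₂ : D n} (h : SameSer α γ₁ γ₂) : SameSer α γ₂ γ₁ := by
  obtain ⟨m, h | h⟩ := h
  · exact ⟨-m, Or.inl (by rw [Int.cast_neg, neg_smul, ← h, neg_sub])⟩
  · exact ⟨m, Or.inr (by rw [add_comm, h])⟩

theorem SameSer.apply_eq_or_eq_neg {α γ₁ γ₂ : D n} (h : SameSer α γ₁ γ₂) {v : V n}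
    (hv : α v = 0) : γ₁ v = γ₂ v ∨ γ₁ v = -γ₂ v := by
  obtain ⟨m, h | h⟩ := h
  · have := LinearMap.congr_fun h v
    simp only [LinearMap.sub_apply, LinearMap.smul_apply, hv, smul_zero] at this
    exact Or.inl (sub_eq_zero.mp this)
  · have := LinearMap.congr_fun h v
    simp only [LinearMap.add_apply, LinearMap.smul_apply, hv, smul_zero] at this
    exact Or.inr (eq_neg_of_add_eq_zero_left this)

theorem IsSeries.mem_iff_of_sameSer {A Γ : Finset (D n)} {α β γ : D n} (hΓ : IsSeries A α Γ)
    (hβ : β ∈ A) (hγ : γ ∈ A) (hαβ : ¬ Parallel α β) (hαγ : ¬ Parallel α γ)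
    (h : SameSer α β γ) : β ∈ Γ ↔ γ ∈ Γ :=
  ⟨fun hβΓ => hΓ.2.2.2 γ hγ hαγ ⟨β, hβΓ, h.symm⟩, fun hγΓ => hΓ.2.2.2 β hβ hαβ ⟨γ, hγΓ, h⟩⟩

end Series

section Vee

variable {n : ℕ} {A : Finset (D n)} {c : D n → ℂ} {vee : D n → V n}

theorem Gform_comm (u v : V n) : Gform A c u v = Gform A c v u :=
  Finset.sum_congr rfl fun _ _ => mul_right_comm _ _ _

theorem apply_vee_comm (hvee : ∀ ξ v, Gform A c (vee ξ) v = ξ v) (α β : D n) :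
    α (vee β) = β (vee α) := by
  rw [← hvee α, ← hvee β, Gform_comm]

theorem sum_apply_vee_mul_wedge_eq_zero (hvee : ∀ ξ v, Gform A c (vee ξ) v = ξ v)
    (α : D n) (a b : V n) : ∑ β ∈ A, c β * α (vee β) * wedge α β a b = 0 := by
  have hsum : ∀ v, ∑ β ∈ A, c β * α (vee β) * β v = α v := fun v => by
    rw [← hvee α v, Gform]
    exact Finset.sum_congr rfl fun β _ => by rw [apply_vee_comm hvee]
  calc ∑ β ∈ A, c β * α (vee β) * wedge α β a b
      = α a * ∑ β ∈ A, c β * α (vee β) * β b - α b * ∑ β ∈ A, c β * α (vee β) * β a := by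
        simp only [wedge, Finset.mul_sum, ← Finset.sum_sub_distrib]
        exact Finset.sum_congr rfl fun _ _ => by ring
    _ = 0 := by rw [hsum, hsum, mul_comm, sub_self]

theorem IsSeries.sum_apply_vee_mul_wedge_eq_zero (hvee : ∀ ξ v, Gform A c (vee ξ) v = ξ v)
    {α : D n} {Γ : Finset (D n)} (hΓ : IsSeries A α Γ) {S : Finset (D n)} {γ₀ : D n}
    (hγ₀ : γ₀ ∈ S) (hSA : S ⊆ A) (hSα : ∀ β ∈ S, ¬ Parallel α β)
    (hSγ₀ : ∀ β ∈ S, SameSer α β γ₀) (hout : ∀ β ∈ A, β ∉ S → Parallel α β ∨ α (vee β) = 0)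
    (a b : V n) : ∑ β ∈ Γ, c β * α (vee β) * wedge α β a b = 0 := by
  have hterm : ∀ β ∈ A, β ∉ S → c β * α (vee β) * wedge α β a b = 0 := by
    intro β hβ hβS
    rcases hout β hβ hβS with h | h
    · rw [wedge_eq_zero_of_parallel h, mul_zero]
    · rw [h, mul_zero, zero_mul]
  have hmem : ∀ β ∈ S, β ∈ Γ ↔ γ₀ ∈ Γ := fun β hβ =>
    hΓ.mem_iff_of_sameSer (hSA hβ) (hSA hγ₀) (hSα β hβ) (hSα γ₀ hγ₀) (hSγ₀ β hβ)
  by_cases hγ₀Γ : γ₀ ∈ Γ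
  · rw [Finset.sum_subset hΓ.1 fun β hβ hβΓ => hterm β hβ fun hβS => hβΓ ((hmem β hβS).2 hγ₀Γ)]
    exact _root_.sum_apply_vee_mul_wedge_eq_zero hvee α a b
  · exact Finset.sum_eq_zero fun β hβ => hterm β (hΓ.1 hβ) fun hβS => hγ₀Γ ((hmem β hβS).1 hβ)

end Vee

section FourCovectors

variable {A : Finset (D 2)} {c : D 2 → ℂ} {c₁ c₂ cp cm : ℂ}

theorem Gform_eq_of_four
    (hA : ∀ ξ, ξ ∈ A ↔ ξ = coD 0 ∨ ξ = coD 1 ∨ ξ = coD 0 + coD 1 ∨ ξ = coD 0 - coD 1)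
    (hc1 : c (coD 0) = c₁) (hc2 : c (coD 1) = c₂)
    (hcp : c (coD 0 + coD 1) = cp) (hcm : c (coD 0 - coD 1) = cm) (u v : V 2) :
    Gform A c u v = c₁ * (u 0 * v 0) + c₂ * (u 1 * v 1) + cp * ((u 0 + u 1) * (v 0 + v 1))
      + cm * ((u 0 - u 1) * (v 0 - v 1)) := by
  classical
  have hA' : A = {coD 0, coD 1, coD 0 + coD 1, coD 0 - coD 1} := by ext ξ; simp [hA]
  have ne_of_apply {ξ η : D 2} (v : V 2) (h : ξ v ≠ η v) : ξ ≠ η := DFunLike.ne_iff.mpr ⟨v, h⟩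
  rw [Gform, hA', Finset.sum_insert, Finset.sum_insert, Finset.sum_insert, Finset.sum_singleton,
    hc1, hc2, hcp, hcm]
  · simp only [coD_apply, LinearMap.add_apply, LinearMap.sub_apply]
    ring
  all_goals
    simp only [Finset.mem_insert, Finset.mem_singleton, not_or]
    and_intros <;> exact ne_of_apply ![1, 2] (by norm_num [coD_apply])

theorem det_ne_zero_of_nonDeg
    (hG : ∀ u v : V 2, Gform A c u v = c₁ * (u 0 * v 0) + c₂ * (u 1 * v 1)
      + cp * ((u 0 + u 1) * (v 0 + v 1)) + cm * ((u 0 - u 1) * (v 0 - v 1)))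
    (hnd : NonDeg (Gform A c)) : c₁ * c₂ + (c₁ + c₂) * (cp + cm) + 4 * cp * cm ≠ 0 := by
  let M : Matrix (Fin 2) (Fin 2) ℂ := !![c₁ + cp + cm, cp - cm; cp - cm, c₂ + cp + cm]
  have hM : ∀ u v : V 2, Gform A c u v = u ⬝ᵥ M *ᵥ v := fun u v => by
    simp only [hG, M, dotProduct, mulVec, Fin.sum_univ_two, cons_val', cons_val_zero,
      cons_val_one, empty_val', cons_val_fin_one, of_apply]
    ring
  have hsep : M.SeparatingLeft :=
    separatingLeft_def.mpr fun u hu => hnd u fun v => (hM u v).trans (hu v)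
  have hdet := separatingLeft_iff_det_ne_zero.mp hsep
  rw [det_fin_two_of] at hdet
  convert hdet using 1
  ring

theorem det_mul_apply_vee
    (hG : ∀ u v : V 2, Gform A c u v = c₁ * (u 0 * v 0) + c₂ * (u 1 * v 1)
      + cp * ((u 0 + u 1) * (v 0 + v 1)) + cm * ((u 0 - u 1) * (v 0 - v 1)))
    {vee : D 2 → V 2} (hvee : ∀ ξ v, Gform A c (vee ξ) v = ξ v) :
    (c₁ * c₂ + (c₁ + c₂) * (cp + cm) + 4 * cp * cm) * (coD 0 + coD 1 : D 2) (vee (coD 0 - coD 1))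
      = c₂ - c₁ := by
  have h0 := hvee (coD 0 - coD 1) ![1, 0]
  have h1 := hvee (coD 0 - coD 1) ![0, 1]
  simp only [hG, LinearMap.sub_apply, coD_apply, cons_val_zero, cons_val_one] at h0 h1
  simp only [LinearMap.add_apply, coD_apply]
  linear_combination (c₂ + 2 * cm) * h0 + (c₁ + 2 * cm) * h1

theorem isSeries_add_singleton_sub
    (hA : ∀ ξ, ξ ∈ A ↔ ξ = coD 0 ∨ ξ = coD 1 ∨ ξ = coD 0 + coD 1 ∨ ξ = coD 0 - coD 1) :
    IsSeries A (coD 0 + coD 1) {coD 0 - coD 1} := by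
  have hv : (coD 0 + coD 1 : D 2) ![1, -1] = 0 := by simp [coD_apply]
  refine ⟨by simp [hA], by simpa using not_parallel_of_apply _ hv (by norm_num [coD_apply]),
    by simp [SameSer.refl], ?_⟩
  rintro β hβ hαβ ⟨γ, hγ, hβγ⟩
  rw [Finset.mem_singleton] at hγ ⊢
  subst hγ
  have hβv := hβγ.apply_eq_or_eq_neg hv
  rcases (hA β).1 hβ with rfl | rfl | rfl | rfl
  · norm_num [coD_apply] at hβv
  · norm_num [coD_apply] at hβv
  · exact absurd (Parallel.refl _) hαβ
  · rfl

theorem apply_vee_eq_zero_of_seriesCond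
    (hA : ∀ ξ, ξ ∈ A ↔ ξ = coD 0 ∨ ξ = coD 1 ∨ ξ = coD 0 + coD 1 ∨ ξ = coD 0 - coD 1)
    (hcm : c (coD 0 - coD 1) = cm) (hm : cm ≠ 0) {vee : D 2 → V 2}
    (hS : SeriesCond A c fun ξ η => ξ (vee η)) :
    (coD 0 + coD 1 : D 2) (vee (coD 0 - coD 1)) = 0 := by
  have h := hS _ ((hA _).2 (by simp)) _ (isSeries_add_singleton_sub hA) ![1, 0] ![0, 1]
  norm_num [wedge, coD_apply, hcm, hm] at h
  exact h

theorem IsSeries.sum_apply_vee_mul_wedge_eq_zero_of_coD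
    (hA : ∀ ξ, ξ ∈ A ↔ ξ = coD 0 ∨ ξ = coD 1 ∨ ξ = coD 0 + coD 1 ∨ ξ = coD 0 - coD 1)
    {vee : D 2 → V 2} (hvee : ∀ ξ v, Gform A c (vee ξ) v = ξ v) {α : D 2} {Γ : Finset (D 2)}
    (hα : α = coD 0 ∨ α = coD 1) (hΓ : IsSeries A α Γ) (a b : V 2) :
    ∑ β ∈ Γ, c β * α (vee β) * wedge α β a b = 0 := by
  classical
  rcases hα with rfl | rfl
  · refine hΓ.sum_apply_vee_mul_wedge_eq_zero hvee (S := {coD 1, coD 0 + coD 1, coD 0 - coD 1})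
      (γ₀ := coD 1) (by simp) (by intro β; simp [hA]; tauto) ?_ ?_ ?_ a b
    · simp only [Finset.mem_insert, Finset.mem_singleton, forall_eq_or_imp, forall_eq]
      and_intros <;> exact not_parallel_of_apply ![0, 1] (by simp [coD_apply]) (by simp [coD_apply])
    · simp only [Finset.mem_insert, Finset.mem_singleton, forall_eq_or_imp, forall_eq]
      exact ⟨SameSer.refl _ _, ⟨1, Or.inl (by simp)⟩, ⟨1, Or.inr (by simp)⟩⟩
    · intro β hβ hβS
      rcases (hA β).1 hβ with rfl | rfl | rfl | rfl
      · exact Or.inl (Parallel.refl _)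
      all_goals simp at hβS
  · refine hΓ.sum_apply_vee_mul_wedge_eq_zero hvee (S := {coD 0, coD 0 + coD 1, coD 0 - coD 1})
      (γ₀ := coD 0) (by simp) (by intro β; simp [hA]; tauto) ?_ ?_ ?_ a b
    · simp only [Finset.mem_insert, Finset.mem_singleton, forall_eq_or_imp, forall_eq]
      and_intros <;> exact not_parallel_of_apply ![1, 0] (by simp [coD_apply]) (by simp [coD_apply])
    · simp only [Finset.mem_insert, Finset.mem_singleton, forall_eq_or_imp, forall_eq]
      exact ⟨SameSer.refl _ _, ⟨1, Or.inl (by simp)⟩, ⟨-1, Or.inl (by simp)⟩⟩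
    · intro β hβ hβS
      rcases (hA β).1 hβ with rfl | rfl | rfl | rfl
      · simp at hβS
      · exact Or.inl (Parallel.refl _)
      all_goals simp at hβS

theorem IsSeries.sum_apply_vee_mul_wedge_eq_zero_of_add_or_sub
    (hA : ∀ ξ, ξ ∈ A ↔ ξ = coD 0 ∨ ξ = coD 1 ∨ ξ = coD 0 + coD 1 ∨ ξ = coD 0 - coD 1)
    {vee : D 2 → V 2} (hvee : ∀ ξ v, Gform A c (vee ξ) v = ξ v)
    (h : (coD 0 + coD 1 : D 2) (vee (coD 0 - coD 1)) = 0) {α : D 2} {Γ : Finset (D 2)}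
    (hα : α = coD 0 + coD 1 ∨ α = coD 0 - coD 1) (hΓ : IsSeries A α Γ) (a b : V 2) :
    ∑ β ∈ Γ, c β * α (vee β) * wedge α β a b = 0 := by
  classical
  have hSA : ({coD 0, coD 1} : Finset (D 2)) ⊆ A := by intro β; simp [hA]; tauto
  rcases hα with rfl | rfl
  · refine hΓ.sum_apply_vee_mul_wedge_eq_zero hvee (γ₀ := coD 1) (by simp) hSA ?_ ?_ ?_ a b
    · simp only [Finset.mem_insert, Finset.mem_singleton, forall_eq_or_imp, forall_eq]
      and_intros <;>
        exact not_parallel_of_apply ![1, -1] (by simp [coD_apply]) (by simp [coD_apply])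
    · simp only [Finset.mem_insert, Finset.mem_singleton, forall_eq_or_imp, forall_eq]
      exact ⟨⟨1, Or.inr (by simp)⟩, SameSer.refl _ _⟩
    · intro β hβ hβS
      rcases (hA β).1 hβ with rfl | rfl | rfl | rfl
      · simp at hβS
      · simp at hβS
      · exact Or.inl (Parallel.refl _)
      · exact Or.inr h
  · refine hΓ.sum_apply_vee_mul_wedge_eq_zero hvee (γ₀ := coD 1) (by simp) hSA ?_ ?_ ?_ a b
    · simp only [Finset.mem_insert, Finset.mem_singleton, forall_eq_or_imp, forall_eq]
      and_intros <;> exact not_parallel_of_apply ![1, 1] (by simp [coD_apply]) (by simp [coD_apply])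
    · simp only [Finset.mem_insert, Finset.mem_singleton, forall_eq_or_imp, forall_eq]
      exact ⟨⟨1, Or.inl (by simp)⟩, SameSer.refl _ _⟩
    · intro β hβ hβS
      rcases (hA β).1 hβ with rfl | rfl | rfl | rfl
      · simp at hβS
      · simp at hβS
      · exact Or.inr (by rwa [apply_vee_comm hvee])
      · exact Or.inl (Parallel.refl _)

theorem seriesCond_of_apply_vee_eq_zero
    (hA : ∀ ξ, ξ ∈ A ↔ ξ = coD 0 ∨ ξ = coD 1 ∨ ξ = coD 0 + coD 1 ∨ ξ = coD 0 - coD 1)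
    {vee : D 2 → V 2} (hvee : ∀ ξ v, Gform A c (vee ξ) v = ξ v)
    (h : (coD 0 + coD 1 : D 2) (vee (coD 0 - coD 1)) = 0) :
    SeriesCond A c fun ξ η => ξ (vee η) := by
  intro α hα Γ hΓ a b
  rcases (hA α).1 hα with hα | hα | hα | hα
  · exact hΓ.sum_apply_vee_mul_wedge_eq_zero_of_coD hA hvee (Or.inl hα) a b
  · exact hΓ.sum_apply_vee_mul_wedge_eq_zero_of_coD hA hvee (Or.inr hα) a b
  · exact hΓ.sum_apply_vee_mul_wedge_eq_zero_of_add_or_sub hA hvee h (Or.inl hα) a b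
  · exact hΓ.sum_apply_vee_mul_wedge_eq_zero_of_add_or_sub hA hvee h (Or.inr hα) a b

theorem eq_iff_apply_vee_eq_zero
    (hG : ∀ u v : V 2, Gform A c u v = c₁ * (u 0 * v 0) + c₂ * (u 1 * v 1)
      + cp * ((u 0 + u 1) * (v 0 + v 1)) + cm * ((u 0 - u 1) * (v 0 - v 1)))
    (hnd : NonDeg (Gform A c)) {vee : D 2 → V 2} (hvee : ∀ ξ v, Gform A c (vee ξ) v = ξ v) :
    c₁ = c₂ ↔ (coD 0 + coD 1 : D 2) (vee (coD 0 - coD 1)) = 0 := by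
  have hdet := det_ne_zero_of_nonDeg hG hnd
  have hmul := det_mul_apply_vee hG hvee
  constructor
  · intro h
    exact (mul_eq_zero.1 (hmul.trans (by rw [h, sub_self]))).resolve_left hdet
  · intro h
    rw [h, mul_zero] at hmul
    exact (sub_eq_zero.1 hmul.symm).symm

end FourCovectors

theorem four_covectors_general (c₁ c₂ cp cm : ℂ)
    (hm : cm ≠ 0)
    (A : Finset (D 2))
    (hA : ∀ ξ, ξ ∈ A ↔ ξ = coD 0 ∨ ξ = coD 1 ∨ ξ = coD 0 + coD 1 ∨ ξ = coD 0 - coD 1)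
    (c : D 2 → ℂ) (hc1 : c (coD 0) = c₁) (hc2 : c (coD 1) = c₂)
    (hcp : c (coD 0 + coD 1) = cp) (hcm : c (coD 0 - coD 1) = cm)
    (hnd : NonDeg (Gform A c))
    (vee : D 2 → V 2) (hvee : ∀ ξ : D 2, ∀ v : V 2, Gform A c (vee ξ) v = ξ v) :
    (SeriesCond A c (fun ξ η => ξ (vee η)) ↔ c₁ = c₂) ∧
      (c₁ = c₂ ↔ (coD 0 + coD 1 : D 2) (vee (coD 0 - coD 1)) = 0) := by
  have hortho := eq_iff_apply_vee_eq_zero (Gform_eq_of_four hA hc1 hc2 hcp hcm) hnd hvee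
  refine ⟨⟨fun hS => hortho.2 (apply_vee_eq_zero_of_seriesCond hA hcm hm hS),
    fun h => seriesCond_of_apply_vee_eq_zero hA hvee (hortho.1 h)⟩, hortho⟩

/-- part of Proposition 3: the system `e¹, e², e¹+e², e¹−e²` is a
trigonometric ∨-system iff `c₁ = c₂`, equivalently `(e¹+e², e¹−e²) = 0`. -/
theorem four_covectors (c₁ c₂ cp cm : ℂ)
    (h1 : c₁ ≠ 0) (h2 : c₂ ≠ 0) (hp : cp ≠ 0) (hm : cm ≠ 0)
    (A : Finset (D 2))
    (hA : ∀ ξ, ξ ∈ A ↔ ξ = coD 0 ∨ ξ = coD 1 ∨ ξ = coD 0 + coD 1 ∨ ξ = coD 0 - coD 1)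
    (c : D 2 → ℂ) (hc1 : c (coD 0) = c₁) (hc2 : c (coD 1) = c₂)
    (hcp : c (coD 0 + coD 1) = cp) (hcm : c (coD 0 - coD 1) = cm)
    (hnd : NonDeg (Gform A c))
    (vee : D 2 → V 2) (hvee : ∀ ξ : D 2, ∀ v : V 2, Gform A c (vee ξ) v = ξ v) :
    (SeriesCond A c (fun ξ η => ξ (vee η)) ↔ c₁ = c₂) ∧
      (c₁ = c₂ ↔ (coD 0 + coD 1 : D 2) (vee (coD 0 - coD 1)) = 0) :=
  four_covectors_general c₁ c₂ cp cm hm A hA c hc1 hc2 hcp hcm hnd vee hvee
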